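/- Let G be a graph on n vertices and let k be a natural number. Let G*_k be the graph obtained from G by replacing each vertex v with an iterated balanced blow-up of C5 on 5^k vertices, joining every vertex of the class of u to every vertex of the class of v when uv ∈ E(G), and adding no edges between the classes of u and v when uv ∉ E(G). Then c5(G*_k) = n·N(5^k) + 5^{5k}·c5(G). -/

import Mathlib

/-- The 5-cycle on `Fin 5`. -/
def C5 : SimpleGraph (Fin 5) := SimpleGraph.fromRel (fun i j => j = i + 1)

/-- The number of induced copies of `H` in `G`. -/
noncomputable def inducedCopies {U V : Type} [Fintype U] [Fintype V]
    (H : SimpleGraph U) (G : SimpleGraph V) : ℕ :=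
  Nat.card {s : Finset V // s.card = Fintype.card U ∧
    Nonempty (G.induce (s : Set V) ≃g H)}

/-- The number of induced copies of the 5-cycle in `G`. -/
noncomputable def c5 {V : Type} [Fintype V] (G : SimpleGraph V) : ℕ :=
  inducedCopies C5 G

/-- Depth-bounded iterated balanced blow-up. -/
def iterAux {U : Type} [Fintype U] (H : SimpleGraph U) :
    ℕ → ∀ (W : Type), SimpleGraph W → Prop
  | 0, W, _ => Nat.card W < Fintype.card U
  | (k+1), W, G =>
      Nat.card W < Fintype.card U ∨
        ∃ P : W → U, Function.Surjective P ∧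
          (∀ w w' : W, P w ≠ P w' → (G.Adj w w' ↔ H.Adj (P w) (P w'))) ∧
          (∀ u v : U, Nat.card {w : W // P w = u} ≤ Nat.card {w : W // P w = v} + 1) ∧
          ∀ u : U, iterAux H k ↥{w : W | P w = u} (G.induce {w : W | P w = u})

/-- `G` is an iterated balanced blow-up of `H`. -/
def IsIterBalancedBlowupOf {U : Type} [Fintype U] (H : SimpleGraph U)
    {W : Type} (G : SimpleGraph W) : Prop :=
  ∃ k : ℕ, iterAux H k W G

/-- `N n` is the number of induced 5-cycles in an iterated balanced blow-up of `C5`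
on `n` vertices. -/
def N : ℕ → ℕ
  | n =>
    if h : n ≤ 4 then 0
    else (n / 5) ^ (5 - n % 5) * (n / 5 + 1) ^ (n % 5)
      + (5 - n % 5) * N (n / 5) + (n % 5) * N (n / 5 + 1)
termination_by n => n
decreasing_by all_goals omega


/-!
Count induced embeddings `C5 ↪g G` instead of induced copies: the two counts differ by the
factor `|C5 ↪g C5|`, which is positive and cancels. The 5-cycle is a prime graph (it has no
nontrivial module), so an induced embedding of it into a blow-up of `H` along `P : V → W` either
lands in a single part or meets five distinct parts and projects to an induced embedding into `H`,
whose lifts are exactly the choices of one vertex in each of its five parts. This gives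
`#(C5 ↪g G) = ∑ w, #(C5 ↪g G[P⁻¹ w]) + ∑ g : C5 ↪g H, ∏ i, |P⁻¹ (g i)|`.
For a balanced blow-up of `C5` the second term is `|C5 ↪g C5|` times the product of the part
sizes, which turns the identity into the recursion defining `N`. Finally `Gk` is a blow-up of `G` along `Prod.fst` whose
parts carry iterated balanced blow-ups of `C5` on `5^k` vertices.
-/

namespace SimpleGraph

section Embeddings

variable {U V : Type*} {F : SimpleGraph U} {G : SimpleGraph V}

def Embedding.toInduce (f : F ↪g G) {s : Set V} (hs : ∀ i, f i ∈ s) : F ↪g G.induce s where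
  toFun i := ⟨f i, hs i⟩
  inj' _ _ h := f.injective (congrArg Subtype.val h)
  map_rel_iff' := f.map_adj_iff

instance Embedding.finite [Finite U] [Finite V] : Finite (F ↪g G) :=
  Finite.of_injective _ DFunLike.coe_injective

theorem card_embedding_eq_zero_of_card_lt [Finite V] (h : Nat.card V < Nat.card U) :
    Nat.card (F ↪g G) = 0 := by
  rw [Nat.card_eq_zero]
  exact .inl ⟨fun f => h.not_ge (Nat.card_le_card_of_injective f f.injective)⟩

noncomputable def embeddingRangeFiberEquiv [Fintype U] [Fintype V] {s : Finset V}
    (e : G.induce (s : Set V) ≃g F) :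
    {f : F ↪g G // Finset.univ.map f.toEmbedding = s} ≃ (F ↪g F) where
  toFun f := e.toEmbedding.comp <| f.1.toInduce fun i => by
    have hi := Finset.mem_map_of_mem f.1.toEmbedding (Finset.mem_univ i)
    rw [f.2] at hi
    exact hi
  invFun h := ⟨(Embedding.induce _).comp (e.symm.toEmbedding.comp h), by
    ext v
    simp only [Finset.mem_map, Finset.mem_univ, true_and]
    refine ⟨?_, fun hv => ?_⟩
    · rintro ⟨i, rfl⟩
      exact (e.symm (h i)).2
    · obtain ⟨i, hi⟩ := (Finite.injective_iff_surjective.mp h.injective) (e ⟨v, hv⟩)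
      exact ⟨i, by simp [hi]⟩⟩
  left_inv f := by ext; simp; rfl
  right_inv h := by ext; simp [Embedding.toInduce]

end Embeddings

section InducedCopies

variable {U V : Type} [Fintype U] [Fintype V] {F : SimpleGraph U} {G : SimpleGraph V}

noncomputable def embeddingRange (f : F ↪g G) :
    {s : Finset V // s.card = Fintype.card U ∧ Nonempty (G.induce (s : Set V) ≃g F)} :=
  ⟨Finset.univ.map f.toEmbedding, by simp,
    ⟨(RelIso.ofSurjective (f.toInduce (by simp)) (by
      rintro ⟨v, hv⟩
      obtain ⟨i, -, rfl⟩ := Finset.mem_map.mp hv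
      exact ⟨i, rfl⟩)).symm⟩⟩

theorem card_embedding_eq_mul_inducedCopies :
    Nat.card (F ↪g G) = Nat.card (F ↪g F) * inducedCopies F G := by
  classical
  rw [← Nat.card_congr (Equiv.sigmaFiberEquiv embeddingRange), Nat.card_sigma]
  trans ∑ _s : {s : Finset V // s.card = Fintype.card U ∧
    Nonempty (G.induce (s : Set V) ≃g F)}, Nat.card (F ↪g F)
  · refine Finset.sum_congr rfl fun s _ => Nat.card_congr ?_
    exact (Equiv.subtypeEquivRight fun f => Subtype.ext_iff).trans
      (embeddingRangeFiberEquiv s.2.2.some)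
  · rw [Finset.sum_const, Finset.card_univ, smul_eq_mul, mul_comm, inducedCopies,
      ← Nat.card_eq_fintype_card]

end InducedCopies

section Blowups

variable {U V W : Type*} {F : SimpleGraph U} {G : SimpleGraph V} {H : SimpleGraph W}
  {P : V → W}

def IsModule (F : SimpleGraph U) (M : Set U) : Prop :=
  ∀ z ∉ M, ∀ a ∈ M, ∀ b ∈ M, F.Adj z a → F.Adj z b

def IsPrime (F : SimpleGraph U) : Prop :=
  ∀ M, F.IsModule M → M.Subsingleton ∨ M = Set.univ

def IsBlowupAlong (G : SimpleGraph V) (H : SimpleGraph W) (P : V → W) : Prop :=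
  ∀ v v', P v ≠ P v' → (G.Adj v v' ↔ H.Adj (P v) (P v'))

namespace IsBlowupAlong

theorem isModule_fiber (hP : G.IsBlowupAlong H P) (f : F ↪g G) (w : W) :
    F.IsModule {i | P (f i) = w} := by
  intro z hz a (ha : P (f a) = w) b (hb : P (f b) = w) hza
  rw [← f.map_adj_iff, hP _ _ (ha ▸ hz), ha] at hza
  rwa [← f.map_adj_iff, hP _ _ (hb ▸ hz), hb]

theorem injective_or_exists_const (hP : G.IsBlowupAlong H P) (hF : F.IsPrime) (f : F ↪g G) :
    Function.Injective (P ∘ f) ∨ ∃ w, ∀ i, P (f i) = w := by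
  refine or_iff_not_imp_left.mpr fun hinj => ?_
  obtain ⟨i, j, hij, hne⟩ := Function.not_injective_iff.mp hinj
  refine ⟨P (f j), fun k => ?_⟩
  rcases hF _ (hP.isModule_fiber f (P (f j))) with h | h
  · exact absurd (h hij rfl) hne
  · exact Set.eq_univ_iff_forall.mp h k

def liftEmbedding (hP : G.IsBlowupAlong H P) (g : F ↪g H) (c : ∀ i, {v | P v = g i}) :
    F ↪g G where
  toFun i := c i
  inj' i j h := g.injective <| (c i).2.symm.trans <| (congrArg P h).trans (c j).2
  map_rel_iff' {i j} := by
    obtain rfl | hij := eq_or_ne i j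
    · simp
    have hc : ∀ i, P (c i) = g i := fun i => (c i).2
    change G.Adj (c i) (c j) ↔ F.Adj i j
    rw [hP _ _ (by simpa only [hc] using g.injective.ne hij), hc, hc, g.map_adj_iff]

variable (F) in
def embeddingOfSum (hP : G.IsBlowupAlong H P) :
    (Σ w, F ↪g G.induce {v | P v = w}) ⊕ (Σ g : F ↪g H, ∀ i, {v | P v = g i}) →
      (F ↪g G)
  | .inl ⟨_, f⟩ => (Embedding.induce _).comp f
  | .inr ⟨g, c⟩ => hP.liftEmbedding g c

theorem bijective_embeddingOfSum [Nontrivial U] (hP : G.IsBlowupAlong H P) (hF : F.IsPrime) :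
    Function.Bijective (hP.embeddingOfSum F) := by
  obtain ⟨i₀, j₀, hij₀⟩ := exists_pair_ne U
  have hlift : ∀ (g : F ↪g H) c i, P (hP.liftEmbedding g c i) = g i := fun g c i => (c i).2
  refine ⟨?_, fun f => ?_⟩
  · rintro (⟨w, f⟩ | ⟨g, c⟩) (⟨w', f'⟩ | ⟨g', c'⟩) h <;>
      have h' := DFunLike.congr_fun h <;> simp only [embeddingOfSum] at h'
    · obtain rfl : w = w' := (f i₀).2.symm.trans <| (congrArg P (h' i₀)).trans (f' i₀).2
      obtain rfl : f = f' := RelEmbedding.ext fun i => Subtype.ext (h' i)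
      rfl
    · refine absurd (g'.injective ?_) hij₀
      rw [← hlift g' c', ← hlift g' c', ← h', ← h']
      exact (f i₀).2.trans (f j₀).2.symm
    · refine absurd (g.injective ?_) hij₀
      rw [← hlift g c, ← hlift g c, h', h']
      exact (f' i₀).2.trans (f' j₀).2.symm
    · obtain rfl : g = g' := RelEmbedding.ext fun i => by
        rw [← hlift g c, ← hlift g' c', h']
      obtain rfl : c = c' := funext fun i => Subtype.ext (h' i)
      rfl
  · rcases hP.injective_or_exists_const hF f with hinj | ⟨w, hw⟩
    · let g : F ↪g H := ⟨⟨P ∘ f, hinj⟩, fun {i j} => by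
        obtain rfl | hij := eq_or_ne i j
        · simp
        · exact (hP _ _ (hinj.ne hij)).symm.trans f.map_adj_iff⟩
      exact ⟨.inr ⟨g, fun i => ⟨f i, rfl⟩⟩, rfl⟩
    · exact ⟨.inl ⟨w, f.toInduce hw⟩, rfl⟩

theorem card_embedding_eq [Fintype U] [Nontrivial U] [Finite V] [Fintype W]
    (hP : G.IsBlowupAlong H P) (hF : F.IsPrime) :
    Nat.card (F ↪g G) = ∑ w, Nat.card (F ↪g G.induce {v | P v = w}) +
      ∑ g : F ↪g H, ∏ i, Nat.card {v | P v = g i} := by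
  rw [← Nat.card_congr (Equiv.ofBijective _ (hP.bijective_embeddingOfSum hF)), Nat.card_sum,
    Nat.card_sigma, Nat.card_sigma]
  simp only [Nat.card_pi]

end IsBlowupAlong

def induceFiberFstIso {A B : Type*} {G : SimpleGraph (A × B)} {inner : A → SimpleGraph B}
    (h : ∀ p q : A × B, p.1 = q.1 → (G.Adj p q ↔ (inner p.1).Adj p.2 q.2)) (a : A) :
    G.induce {p | p.1 = a} ≃g inner a where
  toFun p := p.1.2
  invFun b := ⟨(a, b), rfl⟩
  left_inv p := Subtype.ext (Prod.ext p.2.symm rfl)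
  right_inv _ := rfl
  map_rel_iff' {p q} := by
    obtain ⟨⟨a', b⟩, rfl : a' = a⟩ := p
    obtain ⟨⟨a'', b'⟩, rfl : a'' = a'⟩ := q
    exact (h (a'', b) (a'', b') rfl).symm

end Blowups

end SimpleGraph

namespace Fintype

open Finset

variable {ι M : Type*} [Fintype ι] [CommMonoid M]

@[to_additive]
theorem prod_comp_of_forall_eq_or_eq_succ (s : ι → ℕ) (c : ℕ)
    (hs : ∀ i, s i = c ∨ s i = c + 1) (φ : ℕ → M) :
    ∏ i, φ (s i) = φ c ^ (card ι - #{i | s i = c + 1}) * φ (c + 1) ^ #{i | s i = c + 1} := by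
  have hcard := card_filter_add_card_filter_not (s := univ) fun i => s i = c + 1
  rw [card_univ] at hcard
  rw [← prod_filter_mul_prod_filter_not univ fun i => s i = c + 1,
    prod_eq_pow_card fun i hi => congrArg φ (mem_filter.mp hi).2,
    prod_eq_pow_card fun i hi => congrArg φ ((hs i).resolve_right (mem_filter.mp hi).2),
    mul_comm, ← hcard, Nat.add_sub_cancel_left]

@[to_additive]
theorem prod_comp_of_balanced (s : ι → ℕ) (hs : ∀ i j, s i ≤ s j + 1) (φ : ℕ → M) :
    ∏ i, φ (s i) = φ ((∑ i, s i) / card ι) ^ (card ι - (∑ i, s i) % card ι) *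
      φ ((∑ i, s i) / card ι + 1) ^ ((∑ i, s i) % card ι) := by
  cases isEmpty_or_nonempty ι
  · simp
  obtain ⟨i₀, hi₀⟩ := Finite.exists_min s
  have hs' : ∀ i, s i = s i₀ ∨ s i = s i₀ + 1 := fun i => by
    have := hs i i₀
    have := hi₀ i
    omega
  have hlt : #{i | s i = s i₀ + 1} < card ι :=
    Finset.card_lt_card (Finset.filter_ssubset.mpr ⟨i₀, Finset.mem_univ _, by omega⟩)
  have hsum := sum_comp_of_forall_eq_or_eq_succ s _ hs' id
  simp only [id, smul_eq_mul] at hsum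
  set a := #{i | s i = s i₀ + 1}
  obtain ⟨hdiv, hmod⟩ := (Nat.div_mod_unique (a := ∑ i, s i) (d := s i₀) card_pos).mpr
    ⟨by rw [hsum]; zify [hlt.le]; ring, hlt⟩
  rw [hdiv, hmod, prod_comp_of_forall_eq_or_eq_succ s _ hs' φ]

end Fintype

lemma N_of_le_four {n : ℕ} (h : n ≤ 4) : N n = 0 := by
  rw [N, dif_pos h]

lemma N_of_five_le {n : ℕ} (h : 5 ≤ n) :
    N n = (n / 5) ^ (5 - n % 5) * (n / 5 + 1) ^ (n % 5)
      + (5 - n % 5) * N (n / 5) + (n % 5) * N (n / 5 + 1) := by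
  rw [N, dif_neg (by omega)]

theorem N_sum_of_balanced (s : Fin 5 → ℕ) (hs : ∀ i j, s i ≤ s j + 1) :
    N (∑ i, s i) = ∏ i, s i + ∑ i, N (s i) := by
  have hprod := Fintype.prod_comp_of_balanced s hs id
  simp only [id] at hprod
  rw [hprod, Fintype.sum_comp_of_balanced s hs N]
  simp only [Fintype.card_fin, smul_eq_mul]
  rcases le_or_gt (∑ i, s i) 4 with h | h
  · rw [N_of_le_four h, N_of_le_four (by omega), N_of_le_four (by omega),
      Nat.div_eq_of_lt (by omega), Nat.mod_eq_of_lt (by omega), zero_pow (by omega)]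
    simp
  · rw [N_of_five_le h]
    ring

open SimpleGraph

theorem C5_adj {i j : Fin 5} : C5.Adj i j ↔ j = i + 1 ∨ i = j + 1 := by
  rw [C5, fromRel_adj, and_iff_right_iff_imp]
  rintro (rfl | rfl) <;> simp

instance : DecidableRel C5.Adj := fun _ _ => decidable_of_iff _ C5_adj.symm

theorem C5_isPrime : C5.IsPrime := by
  intro M hM
  classical
  have key : ∀ M : Finset (Fin 5),
      (∀ z ∉ M, ∀ a ∈ M, ∀ b ∈ M, C5.Adj z a → C5.Adj z b) →
        M.card ≤ 1 ∨ M = Finset.univ := by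
    decide
  unfold IsModule at hM
  rcases key M.toFinset (by simpa only [Set.mem_toFinset] using hM) with h | h
  · exact .inl fun x hx y hy => Finset.card_le_one.mp h x (by simpa) y (by simpa)
  · exact .inr (Set.toFinset_eq_univ.mp h)

theorem card_embedding_C5_of_card_lt {W : Type*} [Finite W] {G : SimpleGraph W}
    (h : Nat.card W < 5) : Nat.card (C5 ↪g G) = Nat.card (C5 ↪g C5) * N (Nat.card W) := by
  rw [card_embedding_eq_zero_of_card_lt (by simpa), N_of_le_four (by omega), mul_zero]

theorem card_embedding_C5_of_iterAux (k : ℕ) (W : Type) [Finite W] (G : SimpleGraph W)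
    (h : iterAux C5 k W G) : Nat.card (C5 ↪g G) = Nat.card (C5 ↪g C5) * N (Nat.card W) := by
  induction k generalizing W with
  | zero => exact card_embedding_C5_of_card_lt (by simpa [iterAux] using h)
  | succ k ih =>
    rcases h with hlt | ⟨P, -, hP, hbal, hrec⟩
    · exact card_embedding_C5_of_card_lt (by simpa using hlt)
    have hperm : ∀ g : C5 ↪g C5,
        ∏ i, Nat.card {w | P w = g i} = ∏ u, Nat.card {w | P w = u} :=
      fun g => Equiv.prod_comp (.ofBijective g (Finite.injective_iff_bijective.mp g.injective))
        fun u => Nat.card {w | P w = u}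
    have hW : Nat.card W = ∑ u, Nat.card {w | P w = u} := by
      rw [← Nat.card_sigma]
      exact (Nat.card_congr (Equiv.sigmaFiberEquiv P)).symm
    rw [IsBlowupAlong.card_embedding_eq hP C5_isPrime,
      Finset.sum_congr rfl fun u _ => ih _ _ (hrec u),
      Finset.sum_congr rfl fun g _ => hperm g, Finset.sum_const, Finset.card_univ, smul_eq_mul,
      ← Nat.card_eq_fintype_card, ← Finset.mul_sum, ← mul_add, add_comm, hW,
      N_sum_of_balanced (fun u => Nat.card {w | P w = u}) hbal]

/-- Let `Gk` be obtained from a graph `G` on `n` vertices by replacing each vertex `v`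
by an iterated balanced blow-up `inner v` of `C5` on `5^k` vertices, joining classes of
distinct vertices completely or not at all according to adjacency in `G`. Then
`c5(Gk) = n · N(5^k) + 5^(5k) · c5(G)`. -/
theorem c5_blowup_formula (n k : ℕ) (G : SimpleGraph (Fin n))
    (inner : Fin n → SimpleGraph (Fin (5 ^ k)))
    (hinner : ∀ v : Fin n, IsIterBalancedBlowupOf C5 (inner v))
    (Gk : SimpleGraph (Fin n × Fin (5 ^ k)))
    (hGk : ∀ p q : Fin n × Fin (5 ^ k),
      Gk.Adj p q ↔ (p.1 ≠ q.1 ∧ G.Adj p.1 q.1) ∨ (p.1 = q.1 ∧ (inner p.1).Adj p.2 q.2)) :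
    c5 Gk = n * N (5 ^ k) + 5 ^ (5 * k) * c5 G := by
  have hP : Gk.IsBlowupAlong G Prod.fst := fun p q hpq => by simp [hGk, hpq]
  have hfiber : ∀ v, Gk.induce {p | p.1 = v} ≃g inner v :=
    induceFiberFstIso fun p q hpq => by simp [hGk, hpq]
  have hfiber_count : ∀ v, Nat.card (C5 ↪g Gk.induce {p | p.1 = v}) =
      Nat.card (C5 ↪g C5) * N (5 ^ k) := fun v => by
    obtain ⟨d, hd⟩ := hinner v
    rw [Nat.card_congr ((RelIso.refl _).relEmbeddingCongr (hfiber v)),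
      card_embedding_C5_of_iterAux d _ _ hd, Nat.card_fin]
  have hfiber_card : ∀ v, Nat.card {p : Fin n × Fin (5 ^ k) | p.1 = v} = 5 ^ k := fun v => by
    rw [Nat.card_congr (hfiber v).toEquiv, Nat.card_fin]
  have hC5 : 0 < Nat.card (C5 ↪g C5) :=
    Nat.card_pos_iff.mpr ⟨⟨Embedding.refl⟩, inferInstance⟩
  refine Nat.eq_of_mul_eq_mul_left hC5 ?_
  rw [c5, ← card_embedding_eq_mul_inducedCopies, hP.card_embedding_eq C5_isPrime]
  simp only [hfiber_count, hfiber_card, Finset.prod_const, Finset.sum_const, Finset.card_univ,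
    Fintype.card_fin, smul_eq_mul]
  rw [← Nat.card_eq_fintype_card, card_embedding_eq_mul_inducedCopies (G := G), c5]
  ring
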